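/- arXiv:2105.07438 — 3 statements merged into one kernel-verified Lean document; each statement's English description precedes it below -/
import Mathlib

section
/- If α, δ ∈ (0,1) with α + δ < 1 and N_s ≥ 1 satisfy (1 + α/δ)·(1 − α/(1−δ))^(N_s−1) > 1, and r = (r_1,…,r_K) are nonnegative integers with Σ r_i ≤ N_s, then every maximizer m of the function f(m) = (1+α/δ)^{r_m} · (1 − α/(1−δ))^{−Σ_{i=1}^{m} r_i} over m ∈ {1,…,K} satisfies r_m = max_n r_n; moreover the largest maximizer of f equals the largest index n achieving max_n r_n. -/
/-!
Write `a = 1 + α/δ` and `c = (1 - α/(1-δ))⁻¹`, so that `f m = a ^ r m * c ^ S m` with `S` the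
partial sums of `r`, and the hypothesis reads `c ^ (Ns - 1) < a`. It suffices that `r m < r n`
forces `f m < f n`, and that `f` is monotone along indices where `r` does not decrease. The only
nontrivial case is `n < m`: passing from `n` to `m` loses `e = r n - r m ≥ 1` powers of `a` and
gains `t` powers of `c`, where `t` is the mass of `r` on `(n, m]`. As `r n + t ≤ Ns` we have
`t ≤ Ns - e ≤ e * (Ns - 1)`, hence `c ^ t ≤ (c ^ (Ns - 1)) ^ e < a ^ e`.
-/

open Finset

section Maximizers

variable {ι β γ : Type*} [Fintype ι] [LinearOrder β] [LinearOrder γ] [OrderBot γ]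
  {f : ι → β} {r : ι → γ}

theorem eq_sup_of_forall_le_of_lt_imp_lt (hlt : ∀ m n, r m < r n → f m < f n) {m : ι}
    (hm : ∀ n, f n ≤ f m) : r m = univ.sup r :=
  le_antisymm (le_sup (mem_univ m)) <|
    Finset.sup_le fun n _ => le_of_not_gt fun h => (hlt m n h).not_ge (hm n)

theorem max_filter_isMax_eq_max_filter_eq_sup [LinearOrder ι] (hlt : ∀ m n, r m < r n → f m < f n)
    (hle : ∀ m n, m ≤ n → r m ≤ r n → f m ≤ f n) :
    (univ.filter fun m => ∀ n, f n ≤ f m).max = (univ.filter fun m => r m = univ.sup r).max := by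
  set A := univ.filter fun m => ∀ n, f n ≤ f m
  set B := univ.filter fun m => r m = univ.sup r
  have hAB : A ⊆ B := fun m hm => by
    simp only [A, B, mem_filter, mem_univ, true_and] at hm ⊢
    exact eq_sup_of_forall_le_of_lt_imp_lt hlt hm
  refine le_antisymm (max_mono hAB) ?_
  rcases B.eq_empty_or_nonempty with hB | hB
  · simp [hB]
  obtain ⟨hb, hbmax⟩ : B.max' hB ∈ B ∧ ∀ m ∈ B, m ≤ B.max' hB :=
    ⟨max'_mem B hB, fun m hm => le_max' B m hm⟩
  simp only [B, mem_filter, mem_univ, true_and] at hb hbmax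
  have hbA : B.max' hB ∈ A := by
    simp only [A, mem_filter, mem_univ, true_and]
    intro n
    rcases (le_sup (f := r) (mem_univ n)).lt_or_eq with hn | hn
    · exact (hlt n _ (hb ▸ hn)).le
    · exact hle n _ (hbmax n hn) (hb ▸ hn.le)
  rw [← coe_max' hB]
  exact le_max hbA

end Maximizers

section PartialSums

variable {ι : Type*} [Fintype ι] [LinearOrder ι] (r : ι → ℕ)

def partialSum (m : ι) : ℕ := ∑ i ∈ univ.filter (· ≤ m), r i

theorem partialSum_mono : Monotone (partialSum r) := fun _ _ hmn =>
  sum_le_sum_of_subset <| monotone_filter_right _ fun _ _ h => h.trans hmn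

theorem exists_partialSum_eq_add_of_lt {n m : ι} (hnm : n < m) :
    ∃ t, partialSum r m = partialSum r n + t ∧ r n + t ≤ ∑ i, r i := by
  set D := (univ.filter (· ≤ m)).filter fun i => ¬i ≤ n
  refine ⟨∑ i ∈ D, r i, ?_, ?_⟩
  · rw [partialSum, ← sum_filter_add_sum_filter_not _ (· ≤ n), filter_filter, partialSum]
    congr 2
    ext i
    simp only [mem_filter, mem_univ, true_and, and_iff_right_iff_imp]
    exact fun hi => hi.trans hnm.le
  · have hn : n ∉ D := by simp [D]
    rw [← sum_insert hn]
    exact sum_le_sum_of_subset (subset_univ _)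

end PartialSums

section Objective

variable {ι : Type*} [Fintype ι] [LinearOrder ι] {r : ι → ℕ} {a c : ℝ}

theorem pow_lt_pow_of_pow_pred_lt {N e t : ℕ} (hc : 1 ≤ c) (hca : c ^ (N - 1) < a) (he : 1 ≤ e)
    (hte : t + e ≤ N) : c ^ t < a ^ e :=
  calc c ^ t ≤ (c ^ (N - 1)) ^ e := by
        rw [← pow_mul]
        refine pow_le_pow_right₀ hc ?_
        calc t ≤ N - 1 := by omega
          _ ≤ (N - 1) * e := Nat.le_mul_of_pos_right _ he
    _ < a ^ e := pow_lt_pow_left₀ hca (by positivity) (by omega)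

def mlObjective (a c : ℝ) (r : ι → ℕ) (m : ι) : ℝ := a ^ r m * c ^ partialSum r m

theorem mlObjective_le_of_le (hc : 1 ≤ c) (ha : 1 ≤ a) {m n : ι} (hmn : m ≤ n) (hr : r m ≤ r n) :
    mlObjective a c r m ≤ mlObjective a c r n := by
  unfold mlObjective
  gcongr
  exact partialSum_mono r hmn

theorem mlObjective_lt_of_lt {N : ℕ} (hc : 1 ≤ c) (hca : c ^ (N - 1) < a) (hN : ∑ i, r i ≤ N)
    {m n : ι} (hr : r m < r n) :
    mlObjective a c r m < mlObjective a c r n := by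
  unfold mlObjective
  have ha : 1 < a := (one_le_pow₀ hc).trans_lt hca
  rcases lt_or_gt_of_ne (show m ≠ n by rintro rfl; exact hr.false) with hmn | hnm
  · calc a ^ r m * c ^ partialSum r m < a ^ r n * c ^ partialSum r m := by
          gcongr
      _ ≤ a ^ r n * c ^ partialSum r n := by
          gcongr
          exact partialSum_mono r hmn.le
  · obtain ⟨t, hS, ht⟩ := exists_partialSum_eq_add_of_lt r hnm
    obtain ⟨e, he⟩ := Nat.exists_eq_add_of_lt hr
    have hkey : c ^ t < a ^ (e + 1) := pow_lt_pow_of_pow_pred_lt hc hca (by omega) (by omega)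
    calc a ^ r m * c ^ partialSum r m = a ^ r m * c ^ t * c ^ partialSum r n := by
          rw [hS, pow_add]; ring
      _ < a ^ r m * a ^ (e + 1) * c ^ partialSum r n := by
          gcongr
      _ = a ^ r n * c ^ partialSum r n := by rw [he, ← pow_add, add_assoc]

end Objective

theorem stmt_0_general (α δ : ℝ) (hα : α ∈ Set.Ioo (0:ℝ) 1)
    (hαδ : α + δ < 1) (Ns K : ℕ)
    (hcond : (1 + α / δ) * (1 - α / (1 - δ)) ^ (Ns - 1) > 1)
    (r : Fin K → ℕ) (hr : ∑ i, r i ≤ Ns)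
    (f : Fin K → ℝ)
    (hf : ∀ m, f m = (1 + α / δ) ^ (r m) *
      (1 - α / (1 - δ)) ^ (-(∑ i ∈ Finset.univ.filter (· ≤ m), (r i : ℤ)))) :
    (∀ m, (∀ n, f n ≤ f m) → r m = Finset.univ.sup r) ∧
    (Finset.univ.filter (fun m => ∀ n, f n ≤ f m)).max
      = (Finset.univ.filter (fun m => r m = Finset.univ.sup r)).max := by
  set a := 1 + α / δ
  set b := 1 - α / (1 - δ)
  have hδ1 : 0 < 1 - δ := by linarith [hα.1]
  have hb0 : 0 < b := by
    have : α / (1 - δ) < 1 := (div_lt_one hδ1).2 (by linarith)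
    linarith
  have hb1 : b ≤ 1 := by
    have : 0 < α / (1 - δ) := div_pos hα.1 hδ1
    linarith
  have hc : 1 ≤ b⁻¹ := (one_le_inv₀ hb0).2 hb1
  have hca : b⁻¹ ^ (Ns - 1) < a := by
    rw [inv_pow, inv_lt_iff_one_lt_mul₀ (by positivity)]
    exact hcond
  obtain rfl : f = mlObjective a b⁻¹ r := funext fun m => by
    rw [hf, mlObjective, partialSum, ← Nat.cast_sum, zpow_neg, zpow_natCast, inv_pow]
  have hlt := fun m n (h : r m < r n) => mlObjective_lt_of_lt hc hca hr h
  have hle := fun m n (hmn : m ≤ n) (h : r m ≤ r n) =>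
    mlObjective_le_of_le hc ((one_le_pow₀ hc).trans hca.le) hmn h
  refine ⟨fun _ => eq_sup_of_forall_le_of_lt_imp_lt hlt, ?_⟩
  -- `convert` reconciles the decidability instances of the two filters
  convert max_filter_isMax_eq_max_filter_eq_sup hlt hle

/-- Theorem 1: under the condition `(1+α/δ)(1-α/(1-δ))^(N_s-1) > 1`, every maximizer of the
ML objective `f` has maximal `r`-value, and the largest maximizer of `f` is the largest
index achieving `max r`. -/
theorem stmt_0 (α δ : ℝ) (hα : α ∈ Set.Ioo (0:ℝ) 1) (hδ : δ ∈ Set.Ioo (0:ℝ) 1)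
    (hαδ : α + δ < 1) (Ns K : ℕ) (hNs : 1 ≤ Ns) (hK : 1 ≤ K)
    (hcond : (1 + α / δ) * (1 - α / (1 - δ)) ^ (Ns - 1) > 1)
    (r : Fin K → ℕ) (hr : ∑ i, r i ≤ Ns)
    (f : Fin K → ℝ)
    (hf : ∀ m, f m = (1 + α / δ) ^ (r m) *
      (1 - α / (1 - δ)) ^ (-(∑ i ∈ Finset.univ.filter (· ≤ m), (r i : ℤ)))) :
    (∀ m, (∀ n, f n ≤ f m) → r m = Finset.univ.sup r) ∧
    (Finset.univ.filter (fun m => ∀ n, f n ≤ f m)).max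
      = (Finset.univ.filter (fun m => r m = Finset.univ.sup r)).max :=
  stmt_0_general α δ hα hαδ Ns K hcond r hr f hf
end

section
/- Let f : ℝ → ℝ be defined by f(γ) = c₁·φ((γ − m₁)/σ₁)/σ₁ − c₂·φ((γ − m₂)/σ₂)/σ₂ where φ is the standard normal density, m_j = r·μ_j + λ, σ_j = √(r·μ_j + λ) for j = 1,2 with r > 0, λ > 0, μ₂ > μ₁ > 0 and c₁ = c₂ = 1. Then γ* = √((r μ₁ + λ)(r μ₂ + λ)·(ln((r μ₂ + λ)/(r μ₁ + λ))/(r(μ₂ − μ₁)) + 1)) satisfies φ((γ* − m₁)/σ₁)/σ₁ = φ((γ* − m₂)/σ₂)/σ₂, i.e., the two Gaussian densities N(m₁, σ₁²) and N(m₂, σ₂²) are equal at γ*. -/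
/-!
Writing the density of `N(m, m)` as `exp (-((x - m)² / m + log m) / 2) / √(2π)`, the two
densities agree at `x` exactly when `x² / m₁ - 2x + m₁ + log m₁ = x² / m₂ - 2x + m₂ + log m₂`.
The linear terms cancel, so this is a condition on `x²` alone, and solving it gives
`x² = m₁ m₂ (log (m₂ / m₁) / (m₂ - m₁) + 1)`.
-/

open Real

lemma log_div_div_sub_nonneg {a b : ℝ} (ha : 0 < a) (hb : 0 < b) :
    0 ≤ log (b / a) / (b - a) := by
  rcases le_total a b with hab | hba
  · exact div_nonneg (log_nonneg ((one_le_div ha).mpr hab)) (sub_nonneg.mpr hab)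
  · exact div_nonneg_of_nonpos (log_nonpos (div_nonneg hb.le ha.le) ((div_le_one ha).mpr hba))
      (sub_nonpos.mpr hba)

lemma exp_neg_sq_div_sqrt {m : ℝ} (hm : 0 < m) (x : ℝ) :
    exp (-((x - m) / √m) ^ 2 / 2) / √m = exp (-((x - m) ^ 2 / m + log m) / 2) := by
  have hsqrt : √m = exp (log m / 2) := by
    rw [← log_sqrt hm.le, exp_log (sqrt_pos.mpr hm)]
  rw [div_pow, sq_sqrt hm.le, hsqrt, ← exp_sub]
  ring_nf

lemma sq_div_add_log_eq_of_sq_eq {a b x : ℝ} (ha : 0 < a) (hb : 0 < b)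
    (hx : x ^ 2 = a * b * (log (b / a) / (b - a) + 1)) :
    (x - a) ^ 2 / a + log a = (x - b) ^ 2 / b + log b := by
  rcases eq_or_ne a b with rfl | hab
  · rfl
  have hba : b - a ≠ 0 := sub_ne_zero.mpr hab.symm
  rw [log_div hb.ne' ha.ne'] at hx
  field_simp at hx ⊢
  linear_combination hx

/-- The closed-form optimal threshold `γ*` is the crossing point of the two Gaussian
densities `N(m₁, m₁)` and `N(m₂, m₂)` with `mⱼ = r μⱼ + λ`. -/
theorem stmt_5 (r lam μ₁ μ₂ : ℝ) (hr : 0 < r) (hlam : 0 < lam)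
    (hμ₁ : 0 < μ₁) (hμ : μ₁ < μ₂)
    (φ : ℝ → ℝ) (hφ : ∀ x, φ x = (Real.sqrt (2 * Real.pi))⁻¹ * Real.exp (-x ^ 2 / 2))
    (m₁ m₂ γ : ℝ) (hm₁ : m₁ = r * μ₁ + lam) (hm₂ : m₂ = r * μ₂ + lam)
    (hγ : γ = Real.sqrt (m₁ * m₂ * (Real.log (m₂ / m₁) / (r * (μ₂ - μ₁)) + 1))) :
    φ ((γ - m₁) / Real.sqrt m₁) / Real.sqrt m₁
      = φ ((γ - m₂) / Real.sqrt m₂) / Real.sqrt m₂ := by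
  have hm₁pos : 0 < m₁ := by rw [hm₁]; positivity
  have hm₂pos : 0 < m₂ := by rw [hm₂]; nlinarith
  have hgap : r * (μ₂ - μ₁) = m₂ - m₁ := by rw [hm₁, hm₂]; ring
  have hγsq : γ ^ 2 = m₁ * m₂ * (log (m₂ / m₁) / (m₂ - m₁) + 1) := by
    rw [hγ, hgap, sq_sqrt]
    have := log_div_div_sub_nonneg hm₁pos hm₂pos
    positivity
  simp only [hφ, mul_div_assoc, exp_neg_sq_div_sqrt hm₁pos, exp_neg_sq_div_sqrt hm₂pos,
    sq_div_add_log_eq_of_sq_eq hm₁pos hm₂pos hγsq]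
end

section
/- Let Q be the Gaussian tail function. If m₁(M) = c₁·M + λ and m₂(M) = c₂·M + λ with c₂ > c₁ > 0 and λ > 0, and γ*(M) = √(m₁(M) m₂(M) (ln(m₂(M)/m₁(M))/(M(c₂−c₁)) + 1)), then as M → ∞: (γ*(M) − m₁(M))/√(m₁(M)) → +∞ and (γ*(M) − m₂(M))/√(m₂(M)) → −∞; hence Q((γ*(M) − m₁(M))/√m₁(M)) → 0 and Q((γ*(M) − m₂(M))/√m₂(M)) → 1. -/
/-!
Write `m₁ = c₁M + λ`, `m₂ = c₂M + λ` and `ε = ln(m₂/m₁) / (M(c₂ - c₁))`, so that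
`γ* = √(m₁ m₂ (1 + ε))`. Then `(γ* - m₁)/√m₁ = √(m₂(1 + ε)) - √m₁`, and after dividing by `√M`
this tends to `√c₂ - √c₁ > 0` because `mᵢ/M → cᵢ` and `ε → 0`; hence the normalized distance
grows like `√M`. Symmetrically `(γ* - m₂)/√m₂ ~ (√c₁ - √c₂)√M → -∞`. The Gaussian tail `Q`
tends to `0` at `+∞` and to the total mass `1` at `-∞`.
-/

open Filter MeasureTheory ProbabilityTheory Real Set Topology

lemma gaussianPDFReal_zero_one (t : ℝ) :
    gaussianPDFReal 0 1 t = (√(2 * π))⁻¹ * exp (-t ^ 2 / 2) := by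
  simp [gaussianPDFReal]

lemma tendsto_setIntegral_Ioi_atBot {f : ℝ → ℝ} {μ : Measure ℝ} (hf : Integrable f μ) :
    Tendsto (fun x => ∫ t in Ioi x, f t ∂μ) atBot (𝓝 (∫ t, f t ∂μ)) :=
  (aecover_Ioi tendsto_id).integral_tendsto_of_countably_generated hf

lemma tendsto_mul_add_div_self (c d : ℝ) :
    Tendsto (fun M => (c * M + d) / M) atTop (𝓝 c) := by
  have h : Tendsto (fun M => c + d / M) atTop (𝓝 (c + 0)) :=
    tendsto_const_nhds.add (tendsto_const_nhds.div_atTop tendsto_id)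
  rw [add_zero] at h
  refine h.congr' ?_
  filter_upwards [eventually_ne_atTop 0] with M hM
  field_simp

section Asymptotics

variable {p q : ℝ → ℝ} {a b : ℝ}

lemma tendsto_div_of_tendsto_div_self (ha : a ≠ 0)
    (hpa : Tendsto (fun M => p M / M) atTop (𝓝 a)) (hqb : Tendsto (fun M => q M / M) atTop (𝓝 b)) :
    Tendsto (fun M => q M / p M) atTop (𝓝 (b / a)) := by
  refine (hqb.div hpa ha).congr' ?_
  filter_upwards [eventually_ne_atTop 0] with M hM
  exact div_div_div_cancel_right₀ hM _ _

lemma tendsto_sqrt_mul_sub_div_sqrt_div_sqrt {ε : ℝ → ℝ} (ha : 0 < a)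
    (hpa : Tendsto (fun M => p M / M) atTop (𝓝 a)) (hqb : Tendsto (fun M => q M / M) atTop (𝓝 b))
    (hε : Tendsto ε atTop (𝓝 0)) :
    Tendsto (fun M => (√(p M * q M * (ε M + 1)) - p M) / √(p M) / √M) atTop
      (𝓝 (√b - √a)) := by
  have hlim : Tendsto (fun M => √(q M / M * (ε M + 1)) - √(p M / M)) atTop
      (𝓝 (√(b * (0 + 1)) - √a)) :=
    ((hqb.mul (hε.add_const 1)).sqrt).sub hpa.sqrt
  rw [zero_add, mul_one] at hlim
  refine hlim.congr' ?_
  filter_upwards [eventually_gt_atTop 0, hpa.eventually (eventually_gt_nhds ha)]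
    with M hM hpM
  have hp : 0 < p M := (div_pos_iff_of_pos_right hM).1 hpM
  rw [mul_assoc, sqrt_mul hp.le, sub_div, mul_div_cancel_left₀ _ (sqrt_pos.2 hp).ne', div_sqrt,
    sub_div, div_mul_eq_mul_div, sqrt_div' _ hM.le, sqrt_div' _ hM.le]

end Asymptotics

lemma tendsto_atTop_of_tendsto_div_sqrt_pos {f : ℝ → ℝ} {L : ℝ} (hL : 0 < L)
    (h : Tendsto (fun M => f M / √M) atTop (𝓝 L)) : Tendsto f atTop atTop := by
  refine (h.pos_mul_atTop hL tendsto_sqrt_atTop).congr' ?_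
  filter_upwards [eventually_gt_atTop 0] with M hM
  exact div_mul_cancel₀ _ (sqrt_pos.2 hM).ne'

lemma tendsto_atBot_of_tendsto_div_sqrt_neg {f : ℝ → ℝ} {L : ℝ} (hL : L < 0)
    (h : Tendsto (fun M => f M / √M) atTop (𝓝 L)) : Tendsto f atTop atBot := by
  refine (h.neg_mul_atTop hL tendsto_sqrt_atTop).congr' ?_
  filter_upwards [eventually_gt_atTop 0] with M hM
  exact div_mul_cancel₀ _ (sqrt_pos.2 hM).ne'

theorem stmt_16_general (Q : ℝ → ℝ)
    (hQ : ∀ x, Q x = ∫ t in Set.Ioi x, (Real.sqrt (2 * Real.pi))⁻¹ * Real.exp (-t ^ 2 / 2))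
    (c₁ c₂ lam : ℝ) (hc₁ : 0 < c₁) (hc : c₁ < c₂)
    (m₁ m₂ γ : ℝ → ℝ)
    (hm₁ : ∀ M, m₁ M = c₁ * M + lam) (hm₂ : ∀ M, m₂ M = c₂ * M + lam)
    (hγ : ∀ M, γ M = Real.sqrt (m₁ M * m₂ M *
      (Real.log (m₂ M / m₁ M) / (M * (c₂ - c₁)) + 1))) :
    Tendsto (fun M => (γ M - m₁ M) / Real.sqrt (m₁ M)) atTop atTop ∧
    Tendsto (fun M => (γ M - m₂ M) / Real.sqrt (m₂ M)) atTop atBot ∧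
    Tendsto (fun M => Q ((γ M - m₁ M) / Real.sqrt (m₁ M))) atTop (nhds 0) ∧
    Tendsto (fun M => Q ((γ M - m₂ M) / Real.sqrt (m₂ M))) atTop (nhds 1) := by
  obtain rfl : Q = fun x => ∫ t in Ioi x, gaussianPDFReal 0 1 t :=
    funext fun x => by simp only [hQ, gaussianPDFReal_zero_one]
  obtain rfl := funext hm₁
  obtain rfl := funext hm₂
  obtain rfl := funext hγ
  have hc₂ : 0 < c₂ := hc₁.trans hc
  have h₁ := tendsto_mul_add_div_self c₁ lam
  have h₂ := tendsto_mul_add_div_self c₂ lam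
  have hε : Tendsto (fun M => log ((c₂ * M + lam) / (c₁ * M + lam)) / (M * (c₂ - c₁))) atTop
      (𝓝 0) :=
    ((tendsto_div_of_tendsto_div_self hc₁.ne' h₁ h₂).log (div_pos hc₂ hc₁).ne').div_atTop
      (tendsto_id.atTop_mul_const (sub_pos.2 hc))
  have hsqrt : √c₁ < √c₂ := sqrt_lt_sqrt hc₁.le hc
  have t₁ := tendsto_atTop_of_tendsto_div_sqrt_pos (sub_pos.2 hsqrt)
    (tendsto_sqrt_mul_sub_div_sqrt_div_sqrt hc₁ h₁ h₂ hε)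
  have t₂ := tendsto_atBot_of_tendsto_div_sqrt_neg (sub_neg.2 hsqrt)
    (tendsto_sqrt_mul_sub_div_sqrt_div_sqrt hc₂ h₂ h₁ hε)
  simp only [mul_comm (c₂ * _ + lam)] at t₂
  refine ⟨t₁, t₂, tendsto_integral_Ioi_zero t₁, ?_⟩
  simpa only [integral_gaussianPDFReal_eq_one 0 one_ne_zero, Function.comp_def] using
    (tendsto_setIntegral_Ioi_atBot (integrable_gaussianPDFReal 0 1)).comp t₂

/-- Asymptotic separation underlying Lemma 1 (perfect sensing): as `M → ∞`, the normalized
distances of the optimal threshold `γ*(M)` to the two hypothesis means diverge, so the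
corresponding Gaussian tail probabilities tend to `0` and `1`. -/
theorem stmt_16 (Q : ℝ → ℝ)
    (hQ : ∀ x, Q x = ∫ t in Set.Ioi x, (Real.sqrt (2 * Real.pi))⁻¹ * Real.exp (-t ^ 2 / 2))
    (c₁ c₂ lam : ℝ) (hc₁ : 0 < c₁) (hc : c₁ < c₂) (hlam : 0 < lam)
    (m₁ m₂ γ : ℝ → ℝ)
    (hm₁ : ∀ M, m₁ M = c₁ * M + lam) (hm₂ : ∀ M, m₂ M = c₂ * M + lam)
    (hγ : ∀ M, γ M = Real.sqrt (m₁ M * m₂ M *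
      (Real.log (m₂ M / m₁ M) / (M * (c₂ - c₁)) + 1))) :
    Tendsto (fun M => (γ M - m₁ M) / Real.sqrt (m₁ M)) atTop atTop ∧
    Tendsto (fun M => (γ M - m₂ M) / Real.sqrt (m₂ M)) atTop atBot ∧
    Tendsto (fun M => Q ((γ M - m₁ M) / Real.sqrt (m₁ M))) atTop (nhds 0) ∧
    Tendsto (fun M => Q ((γ M - m₂ M) / Real.sqrt (m₂ M))) atTop (nhds 1) :=
  stmt_16_general Q hQ c₁ c₂ lam hc₁ hc m₁ m₂ γ hm₁ hm₂ hγ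
end
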